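/- arXiv:1407.6344 — 3 statements merged into one kernel-verified Lean document; each statement's English description precedes it below -/
import Mathlib

section
/- For integers n, b > 0 and any j with 0 ≤ j ≤ n-1, the sum ∑_{i=0}^{n} (-1)^i ((b+n-i-1)!/(b-1)!) C(n,i) [b+j]_i equals 0, where [k]_l = k(k-1)⋯(k-l+1) denotes the falling factorial. -/
/-!
Write `b = c + 1`. Regrouping falling factorials turns the `i`-th term into
`[c+j+1]_{j+1} · (-1)^i C(n,i) · [c+n-i]_{n-1-j}`, and `i ↦ [c+n-i]_{n-1-j}` is a polynomial of
degree `n-1-j < n`. Up to the sign `(-1)^n`, the alternating binomial sum of a polynomial is its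
`n`-th forward difference at `0`, which vanishes in degree `< n`.
-/

open Finset Polynomial

theorem Polynomial.sum_range_neg_one_pow_mul_choose_mul_eval_eq_zero {R : Type*} [CommRing R]
    {P : R[X]} {n : ℕ} (hP : P.natDegree < n) :
    ∑ i ∈ range (n + 1), (-1 : R) ^ i * n.choose i * P.eval (i : R) = 0 := by
  have hdiff := congr_fun (fwdDiff_iter_eq_zero_of_degree_lt hP) 0
  rw [fwdDiff_iter_eq_sum_shift] at hdiff
  rw [← mul_eq_zero_of_right ((-1 : R) ^ n) hdiff, mul_sum]
  refine sum_congr rfl fun i hi => ?_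
  obtain ⟨k, rfl⟩ := Nat.exists_eq_add_of_le (Nat.lt_succ_iff.mp (mem_range.mp hi))
  have hsign : (-1 : R) ^ (i + k) * (-1) ^ (i + k - i) = (-1) ^ i := by
    rw [Nat.add_sub_cancel_left, pow_add, mul_assoc, ← mul_pow, neg_one_mul, neg_neg, one_pow,
      mul_one]
  simp [zsmul_eq_mul, ← hsign, mul_assoc]

theorem Nat.add_descFactorial_mul_descFactorial_comm {c p q r s : ℕ} (hpqrs : p + q = r + s) :
    (c + p).descFactorial p * (c + r).descFactorial q =
      (c + r).descFactorial r * (c + p).descFactorial s := by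
  rcases le_total q r with hqr | hrq
  · rw [← descFactorial_mul_descFactorial hqr,
      ← descFactorial_mul_descFactorial (show s ≤ p by omega),
      show c + p - s = c + r - q by omega, show p - s = r - q by omega]
    ring
  · rw [← descFactorial_mul_descFactorial hrq,
      ← descFactorial_mul_descFactorial (show p ≤ s by omega),
      show s - p = q - r by omega, Nat.add_sub_cancel, Nat.add_sub_cancel]
    ring

theorem Polynomial.eval_descPochhammer_comp_C_sub_X {R : Type*} [CommRing R] {N i : ℕ} (k : ℕ)
    (hi : i ≤ N) :
    ((descPochhammer R k).comp (C (N : R) - X)).eval (i : R) = (N - i).descFactorial k := by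
  rw [eval_comp, eval_sub, eval_C, eval_X, ← Nat.cast_sub hi,
    descPochhammer_eval_eq_descFactorial]

theorem Polynomial.natDegree_descPochhammer_comp_C_sub_X_le {R : Type*} [CommRing R] (k : ℕ)
    (a : R) : ((descPochhammer R k).comp (C a - X)).natDegree ≤ k := by
  have hdesc : (descPochhammer R k).natDegree ≤ k := by
    rw [← descPochhammer_map (Int.castRingHom R)]
    exact natDegree_map_le.trans (descPochhammer_natDegree ℤ k).le
  have hlin : (C a - X).natDegree ≤ 1 := (natDegree_sub_le _ _).trans (by simp [natDegree_X_le])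
  calc _ ≤ (descPochhammer R k).natDegree * (C a - X).natDegree := natDegree_comp_le
    _ ≤ k * 1 := Nat.mul_le_mul hdesc hlin
    _ = k := mul_one k

/-- For integers `n, b > 0` and `0 ≤ j ≤ n-1`, the sum
`∑_{i=0}^{n} (-1)^i ((b+n-i-1)!/(b-1)!) C(n,i) [b+j]_i = 0`,
where `[k]_l` is the falling factorial. -/
theorem derivative_vanishes (n b j : ℕ) (hn : 0 < n) (hb : 0 < b) (hj : j ≤ n - 1) :
    ∑ i ∈ Finset.range (n + 1),
      (-1 : ℤ) ^ i * ((Nat.factorial (b + n - i - 1) / Nat.factorial (b - 1) : ℕ) : ℤ) *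
        (n.choose i : ℤ) * (Nat.descFactorial (b + j) i : ℤ) = 0 := by
  obtain ⟨c, rfl⟩ : ∃ c, b = c + 1 := ⟨b - 1, by omega⟩
  set P : ℤ[X] := (descPochhammer ℤ (n - 1 - j)).comp (C ((c + n : ℕ) : ℤ) - X)
  have hP : P.natDegree < n := (natDegree_descPochhammer_comp_C_sub_X_le _ _).trans_lt (by omega)
  calc _ = ∑ i ∈ range (n + 1), ((c + (j + 1)).descFactorial (j + 1) : ℤ) *
        ((-1) ^ i * n.choose i * P.eval (i : ℤ)) := by
        refine sum_congr rfl fun i hi => ?_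
        have hin : i ≤ n := Nat.lt_succ_iff.mp (mem_range.mp hi)
        have hratio : (c + 1 + n - i - 1).factorial / (c + 1 - 1).factorial =
            (c + (n - i)).descFactorial (n - i) := by
          rw [Nat.descFactorial_eq_div (Nat.le_add_left _ _), Nat.add_sub_cancel,
            show c + 1 + n - i - 1 = c + (n - i) by omega, Nat.add_sub_cancel]
        have hprod : ((c + (n - i)).descFactorial (n - i) : ℤ) * (c + (j + 1)).descFactorial i =
            (c + (j + 1)).descFactorial (j + 1) * (c + (n - i)).descFactorial (n - 1 - j) :=
          mod_cast Nat.add_descFactorial_mul_descFactorial_comm (by omega)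
        rw [eval_descPochhammer_comp_C_sub_X _ (by omega), show c + n - i = c + (n - i) by omega,
          hratio, show c + 1 + j = c + (j + 1) by omega]
        linear_combination ((-1 : ℤ) ^ i * n.choose i) * hprod
    _ = 0 := by rw [← mul_sum, sum_range_neg_one_pow_mul_choose_mul_eval_eq_zero hP, mul_zero]
end

section
/- For integers n, a, b > 0 with a(n+1) ≠ bn, the sum ∑_{i=0}^{n} (-1)^i (a+i) [b+i-1]_{b-1} C(b+n+1, b+i+1) is nonzero; in fact it equals ± [-1]_{b-1} (bn - a(n+1)) up to sign. -/
/-!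
Put `N = b + n + 1` and `j = b + i + 1`. Up to the sign `(-1)^b`, the sum is the tail `j ≥ b + 1`
of `∑_{j=0}^{N} (-1)^j C(N, j) p(j)` for `p(x) = (x - b - 1 + a) [x - 2]_{b-1}`. This full sum is
an `N`-th forward difference of a polynomial of degree `b < N`, hence vanishes, and `p` vanishes at
`2, …, b`. So the sum is `±(p(0) - N p(1))`, which `[-2]_{b-1} = b [-1]_{b-1}` turns into
`± [-1]_{b-1} (bn - a(n+1))`.
-/

open Finset Polynomial

namespace Polynomial

variable {R : Type*} [CommRing R]

theorem natDegree_descPochhammer_le (k : ℕ) : (descPochhammer R k).natDegree ≤ k := by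
  rw [← descPochhammer_map (Int.castRingHom R)]
  exact natDegree_map_le.trans (descPochhammer_natDegree ℤ k).le

theorem sum_range_neg_one_pow_mul_choose_mul_eval_eq_zero_s4 {P : R[X]} {N : ℕ}
    (hP : P.natDegree < N) :
    ∑ j ∈ range (N + 1), (-1) ^ j * (N.choose j : R) * P.eval (j : R) = 0 := by
  have hΔ := congrFun (fwdDiff_iter_eq_zero_of_degree_lt hP) 0
  rw [fwdDiff_iter_eq_sum_shift, Pi.zero_apply] at hΔ
  calc ∑ j ∈ range (N + 1), (-1) ^ j * (N.choose j : R) * P.eval (j : R)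
      = (-1) ^ N * ∑ j ∈ range (N + 1),
          ((-1 : ℤ) ^ (N - j) * N.choose j) • P.eval (0 + j • (1 : R)) := by
        rw [mul_sum]
        refine sum_congr rfl fun j hj => ?_
        obtain ⟨m, rfl⟩ := Nat.exists_eq_add_of_le (mem_range_succ_iff.mp hj)
        have hsign : (-1 : R) ^ j = (-1) ^ (j + m) * (-1) ^ m := by
          rw [pow_add, mul_assoc, ← pow_add, ← two_mul, pow_mul, neg_one_sq, one_pow, mul_one]
        simp only [hsign, add_tsub_cancel_left, nsmul_eq_mul, mul_one, zero_add, zsmul_eq_mul,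
          Int.cast_mul, Int.cast_pow, Int.cast_neg, Int.cast_one, Int.cast_natCast]
        ring
    _ = 0 := by rw [hΔ, mul_zero]

theorem descPochhammer_eval_neg_two (k : ℕ) :
    (descPochhammer R k).eval (-2) = (k + 1) * (descPochhammer R k).eval (-1) := by
  have h := descPochhammer_succ_eval k (-1 : R)
  rw [descPochhammer_succ_left, eval_mul, eval_comp] at h
  norm_num at h
  linear_combination -h

theorem descPochhammer_eval_neg_one_ne_zero [NoZeroDivisors R] [CharZero R] (k : ℕ) :
    (descPochhammer R k).eval (-1) ≠ 0 := by
  rw [descPochhammer_eval_eq_prod_range, prod_ne_zero_iff]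
  intro j _
  rw [← neg_add', neg_ne_zero, add_comm]
  exact Nat.cast_add_one_ne_zero j

end Polynomial

theorem sum_range_neg_one_pow_mul_descPochhammer_mul_choose {R : Type*} [CommRing R]
    (a : R) (k n : ℕ) :
    ∑ i ∈ range (n + 1), (-1) ^ i * (a + i) * (descPochhammer R k).eval ((k : R) + i) *
        ((k + n + 2).choose (k + i + 2) : R)
      = (-1) ^ (k + 1) * (descPochhammer R k).eval (-1) * ((k + 1) * n - a * (n + 1)) := by
  set D := descPochhammer R k
  set P : R[X] := (X - C (k + 2 - a)) * D.comp (X - C 2)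
  have hP : P.natDegree < k + n + 2 := by
    have : P.natDegree ≤ 1 + k * 1 := natDegree_mul_le.trans <|
      add_le_add (natDegree_X_sub_C_le (R := R) _) <| natDegree_comp_le.trans <|
        Nat.mul_le_mul (natDegree_descPochhammer_le k) (natDegree_X_sub_C_le (R := R) 2)
    omega
  have hP_eval (x : R) : P.eval x = (x - (k + 2 - a)) * D.eval (x - 2) := by simp [P]
  have hsum := sum_range_neg_one_pow_mul_choose_mul_eval_eq_zero_s4 hP
  rw [show k + n + 2 + 1 = (k + 2) + (n + 1) by ring, sum_range_add, sum_range_succ',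
    sum_range_succ', sum_eq_zero fun j hj => ?vanish] at hsum
  case vanish =>
    rw [hP_eval, show ((j + 1 + 1 : ℕ) : R) - 2 = j by push_cast; ring,
      descPochhammer_eval_coe_nat_of_lt (mem_range.mp hj), mul_zero, mul_zero]
  simp only [hP_eval] at hsum
  have tail : ∀ i ∈ range (n + 1),
      (-1) ^ (k + 2 + i) * ((k + n + 2).choose (k + 2 + i) : R) *
          ((((k + 2 + i : ℕ) : R) - (k + 2 - a)) * D.eval (((k + 2 + i : ℕ) : R) - 2))
        = (-1) ^ k * ((-1) ^ i * (a + i) * D.eval ((k : R) + i) *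
          ((k + n + 2).choose (k + i + 2) : R)) := fun i _ => by
    rw [add_right_comm k 2 i, show ((k + i + 2 : ℕ) : R) - 2 = k + i by push_cast; ring]
    push_cast
    ring
  rw [sum_congr rfl tail, ← mul_sum] at hsum
  push_cast at hsum
  norm_num at hsum
  rw [show D.eval (-2) = (k + 1) * D.eval (-1) from descPochhammer_eval_neg_two k] at hsum
  set S := ∑ i ∈ range (n + 1), (-1) ^ i * (a + i) * D.eval ((k : R) + i) *
    ((k + n + 2).choose (k + i + 2) : R)
  have hsign : ((-1 : R) ^ k) * (-1) ^ k = 1 := by rw [← mul_pow]; simp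
  linear_combination (-1 : R) ^ k * hsum - S * hsign

theorem key_sum_nonzero_general (n a b : ℕ) (hb : 0 < b)
    (h : (a : ℤ) * (n + 1) ≠ (b : ℤ) * n) :
    (∃ ε : ℤ, (ε = 1 ∨ ε = -1) ∧
      ∑ i ∈ Finset.range (n + 1),
        (-1 : ℤ) ^ i * ((a : ℤ) + i) * (descPochhammer ℤ (b - 1)).eval ((b : ℤ) + i - 1) *
          ((b + n + 1).choose (b + i + 1) : ℤ)
        = ε * (descPochhammer ℤ (b - 1)).eval (-1) * ((b : ℤ) * n - a * (n + 1))) ∧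
    ∑ i ∈ Finset.range (n + 1),
      (-1 : ℤ) ^ i * ((a : ℤ) + i) * (descPochhammer ℤ (b - 1)).eval ((b : ℤ) + i - 1) *
        ((b + n + 1).choose (b + i + 1) : ℤ) ≠ 0 := by
  obtain ⟨k, rfl⟩ : ∃ k, b = k + 1 := ⟨b - 1, by omega⟩
  have hindex (i : ℕ) : k + 1 + i + 1 = k + i + 2 := by ring
  have harg (i : ℕ) : (k : ℤ) + 1 + i - 1 = k + i := by ring
  simp only [Nat.add_sub_cancel, hindex, Nat.cast_add, Nat.cast_one, harg]
  rw [sum_range_neg_one_pow_mul_descPochhammer_mul_choose]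
  have hne : ((k : ℤ) + 1) * n - a * (n + 1) ≠ 0 := by
    push_cast at h
    exact sub_ne_zero.mpr h.symm
  exact ⟨⟨_, neg_one_pow_eq_or ℤ (k + 1), rfl⟩,
    mul_ne_zero (mul_ne_zero (pow_ne_zero _ (neg_ne_zero.mpr one_ne_zero))
      (descPochhammer_eval_neg_one_ne_zero k)) hne⟩

/-- For integers `n, a, b > 0` with `a(n+1) ≠ bn`, the sum
`∑_{i=0}^{n} (-1)^i (a+i) [b+i-1]_{b-1} C(b+n+1, b+i+1)` equals
`± [-1]_{b-1} (bn - a(n+1))`, and in particular is nonzero. -/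
theorem key_sum_nonzero (n a b : ℕ) (hn : 0 < n) (ha : 0 < a) (hb : 0 < b)
    (h : (a : ℤ) * (n + 1) ≠ (b : ℤ) * n) :
    (∃ ε : ℤ, (ε = 1 ∨ ε = -1) ∧
      ∑ i ∈ Finset.range (n + 1),
        (-1 : ℤ) ^ i * ((a : ℤ) + i) * (descPochhammer ℤ (b - 1)).eval ((b : ℤ) + i - 1) *
          ((b + n + 1).choose (b + i + 1) : ℤ)
        = ε * (descPochhammer ℤ (b - 1)).eval (-1) * ((b : ℤ) * n - a * (n + 1))) ∧
    ∑ i ∈ Finset.range (n + 1),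
      (-1 : ℤ) ^ i * ((a : ℤ) + i) * (descPochhammer ℤ (b - 1)).eval ((b : ℤ) + i - 1) *
        ((b + n + 1).choose (b + i + 1) : ℤ) ≠ 0 :=
  key_sum_nonzero_general n a b hb h
end

section
/- Let N' ⊆ Z^10 be the subgroup generated by a1,…,a8 (as defined from the standard basis: a1 = e1+e5, a2 = e1+e2+e6, a3 = e1+e2+e3+e7, a4 = e1+e2+e3+e4+e8, a5 = e1+e2+e3+e4+e9, a6 = e1+e2+e3+e4+e10, a7 = e5+e6+e7+e8+e9+e10, a8 = e4+e5+e7). Then the quotient Z^10/N' is generated by the images of u = e1, v = e2, w = e3+e5+e6, and 26u + 15v + 7w ∈ N'. -/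
namespace Stmt14

def e (i : Fin 10) : Fin 10 → ℤ := Pi.single i 1

def a1 : Fin 10 → ℤ := e 0 + e 4
def a2 : Fin 10 → ℤ := e 0 + e 1 + e 5
def a3 : Fin 10 → ℤ := e 0 + e 1 + e 2 + e 6
def a4 : Fin 10 → ℤ := e 0 + e 1 + e 2 + e 3 + e 7
def a5 : Fin 10 → ℤ := e 0 + e 1 + e 2 + e 3 + e 8
def a6 : Fin 10 → ℤ := e 0 + e 1 + e 2 + e 3 + e 9
def a7 : Fin 10 → ℤ := e 4 + e 5 + e 6 + e 7 + e 8 + e 9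
def a8 : Fin 10 → ℤ := e 3 + e 4 + e 6

def u : Fin 10 → ℤ := e 0
def v : Fin 10 → ℤ := e 1
def w : Fin 10 → ℤ := e 2 + e 4 + e 5

/-- The subgroup `N'` generated by `a1,…,a8`. -/
def N' : Submodule ℤ (Fin 10 → ℤ) :=
  Submodule.span ℤ ({a1, a2, a3, a4, a5, a6, a7, a8} : Set (Fin 10 → ℤ))

open Submodule Set

lemma span_range_e : span ℤ (range e) = ⊤ := by
  have he : e = Pi.basisFun ℤ (Fin 10) := funext fun i ↦ (Pi.basisFun_apply ℤ (Fin 10) i).symm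
  rw [he]
  exact (Pi.basisFun ℤ (Fin 10)).span_eq

/-- Triangular elimination: each `e i` is a generator minus basis vectors already reached. -/
lemma sup_span_uvw_N'_eq_top : span ℤ {u, v, w} ⊔ N' = ⊤ := by
  set P := span ℤ {u, v, w} ⊔ N'
  have hu : e 0 ∈ P := mem_sup_left (subset_span (by simp [u]))
  have hv : e 1 ∈ P := mem_sup_left (subset_span (by simp [v]))
  have hw : w ∈ P := mem_sup_left (subset_span (by simp))
  have ha : ∀ {a}, a ∈ ({a1, a2, a3, a4, a5, a6, a7, a8} : Set _) → a ∈ P :=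
    fun h ↦ mem_sup_right (subset_span h)
  have h4 : e 4 ∈ P := by
    rw [show e 4 = a1 - e 0 by decide]; exact sub_mem (ha (by simp)) hu
  have h5 : e 5 ∈ P := by
    rw [show e 5 = a2 - e 0 - e 1 by decide]; exact sub_mem (sub_mem (ha (by simp)) hu) hv
  have h2 : e 2 ∈ P := by
    rw [show e 2 = w - e 4 - e 5 by decide]; exact sub_mem (sub_mem hw h4) h5
  have h6 : e 6 ∈ P := by
    rw [show e 6 = a3 - e 0 - e 1 - e 2 by decide]
    exact sub_mem (sub_mem (sub_mem (ha (by simp)) hu) hv) h2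
  have h3 : e 3 ∈ P := by
    rw [show e 3 = a8 - e 4 - e 6 by decide]; exact sub_mem (sub_mem (ha (by simp)) h4) h6
  have h012_3 : e 0 + e 1 + e 2 + e 3 ∈ P := add_mem (add_mem (add_mem hu hv) h2) h3
  have h7 : e 7 ∈ P := by
    rw [show e 7 = a4 - (e 0 + e 1 + e 2 + e 3) by decide]; exact sub_mem (ha (by simp)) h012_3
  have h8 : e 8 ∈ P := by
    rw [show e 8 = a5 - (e 0 + e 1 + e 2 + e 3) by decide]; exact sub_mem (ha (by simp)) h012_3
  have h9 : e 9 ∈ P := by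
    rw [show e 9 = a6 - (e 0 + e 1 + e 2 + e 3) by decide]; exact sub_mem (ha (by simp)) h012_3
  rw [eq_top_iff, ← span_range_e, span_le, range_subset_iff]
  intro i
  fin_cases i <;> assumption

lemma relation_eq :
    (26 : ℤ) • u + (15 : ℤ) • v + (7 : ℤ) • w =
      (11 : ℤ) • a1 + (8 : ℤ) • a2 + (4 : ℤ) • a3 + a4 + a5 + a6 - a7 - (3 : ℤ) • a8 := by
  decide

/-- `ℤ^10 / N'` is generated by the images of `u, v, w`, and `26u + 15v + 7w ∈ N'`. -/
theorem quotient_generated_and_relation :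
    Submodule.span ℤ
        ({Submodule.Quotient.mk u, Submodule.Quotient.mk v, Submodule.Quotient.mk w} :
          Set ((Fin 10 → ℤ) ⧸ N')) = ⊤ ∧
      (26 : ℤ) • u + (15 : ℤ) • v + (7 : ℤ) • w ∈ N' := by
  constructor
  · have himage : ({Submodule.Quotient.mk u, Submodule.Quotient.mk v, Submodule.Quotient.mk w} :
        Set ((Fin 10 → ℤ) ⧸ N')) = N'.mkQ '' {u, v, w} := by
      simp only [image_insert_eq, image_singleton, mkQ_apply]
    rw [himage, ← map_span, map_mkQ_eq_top, sup_comm]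
    exact sup_span_uvw_N'_eq_top
  · rw [relation_eq]
    refine sub_mem (sub_mem (add_mem (add_mem (add_mem (add_mem (add_mem
      (smul_mem _ _ ?_) (smul_mem _ _ ?_)) (smul_mem _ _ ?_)) ?_) ?_) ?_) ?_) (smul_mem _ _ ?_) <;>
      exact subset_span (by simp)

end Stmt14
end
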